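/- Let v1 = v2 > 0 with v2/2 a positive integer, and set m = v2/2 − 1. A strategy profile (X, Y) is a Nash equilibrium of the two-player all-pay auction with valuations (v1, v2) if and only if X = α·U_O^{m+1} + (1−α)·U_E^m and Y = β·U_O^{m+1} + (1−β)·U_E^m for some α, β ∈ [0, 1]. In this case the equilibrium payoffs are P_{v1}(X, Y) = 1 − β and P_{v2}(Y, X) = 1 − α. -/

import Mathlib

open scoped BigOperators

/-- A (mixed) strategy: a probability distribution on the nonnegative
integers with finite expectation. -/
structure Strategy where
  p : ℕ → ℝ
  nonneg : ∀ n, 0 ≤ p n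
  total : HasSum p 1
  finExp : Summable fun n : ℕ => (n : ℝ) * p n

namespace Strategy

/-- Expectation of a strategy. -/
noncomputable def exp (ξ : Strategy) : ℝ := ∑' n : ℕ, (n : ℝ) * ξ.p n

end Strategy

/-- Probability that an observation from `ξ` strictly exceeds an independent
observation from `η`. -/
noncomputable def prGT (ξ η : Strategy) : ℝ :=
  ∑' n, ξ.p n * ∑ k ∈ Finset.range n, η.p k

/-- Probability that independent observations from `ξ` and `η` are equal. -/
noncomputable def prEq (ξ η : Strategy) : ℝ := ∑' n, ξ.p n * η.p n

/-- Expected all-pay auction payoff of a player with valuation `v` playing `ξ`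
against `η`:  `v·Pr(X > Y) + (v/2)·Pr(X = Y) − E(X)`. -/
noncomputable def payoff (v : ℝ) (ξ η : Strategy) : ℝ :=
  v * prGT ξ η + v / 2 * prEq ξ η - ξ.exp

/-- Nash equilibrium of the two-player all-pay auction with valuations `(v1, v2)`. -/
def IsNashAPA (v1 v2 : ℝ) (X Y : Strategy) : Prop :=
  (∀ X' : Strategy, payoff v1 X' Y ≤ payoff v1 X Y) ∧
  (∀ Y' : Strategy, payoff v2 Y' X ≤ payoff v2 Y X)

/-- `H(ξ, η) = Pr(X > Y) − Pr(X < Y)`. -/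
noncomputable def Hval (ξ η : Strategy) : ℝ := prGT ξ η - prGT η ξ

/-- Nash equilibrium of the discrete General Lotto game `Γ(b1, b2)`. -/
def IsNashLotto (b1 b2 : ℝ) (X Y : Strategy) : Prop :=
  X.exp = b1 ∧ Y.exp = b2 ∧
  (∀ X' : Strategy, X'.exp = b1 → Hval X' Y ≤ Hval X Y) ∧
  (∀ Y' : Strategy, Y'.exp = b2 → Hval Y' X ≤ Hval Y X)

/-- `U_O^m`: uniform distribution on the odd numbers `{1, 3, …, 2m−1}` (as a pmf). -/
noncomputable def UO (m : ℕ) : ℕ → ℝ := fun n =>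
  if Odd n ∧ n < 2 * m then (m : ℝ)⁻¹ else 0

/-- `U_E^m`: uniform distribution on the even numbers `{0, 2, …, 2m}` (as a pmf). -/
noncomputable def UE (m : ℕ) : ℕ → ℝ := fun n =>
  if Even n ∧ n ≤ 2 * m then ((m : ℝ) + 1)⁻¹ else 0

/-- `U_{O↑1}^m`: uniform distribution on the even numbers `{2, 4, …, 2m−2}` (as a pmf). -/
noncomputable def UOup (m : ℕ) : ℕ → ℝ := fun n =>
  if Even n ∧ 0 < n ∧ n ≤ 2 * m - 2 then ((m : ℝ) - 1)⁻¹ else 0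

/-- `δ_j`: the point mass at `j` (as a pmf). -/
noncomputable def deltaFn (j : ℕ) : ℕ → ℝ := fun n => if n = j then 1 else 0

/-- `W_j^m = (1/(2m))·δ_0 + Σ_{i=1}^{j−1}(1/m)·δ_{2i} + (1/(2m))·δ_{2j}
      + Σ_{i=j+1}^{m}(1/m)·δ_{2i−1}` (as a pmf). -/
noncomputable def Wfn (j m : ℕ) : ℕ → ℝ := fun n =>
  if n = 0 ∨ n = 2 * j then (2 * (m : ℝ))⁻¹
  else if Even n ∧ n < 2 * j then (m : ℝ)⁻¹
  else if Odd n ∧ 2 * j < n ∧ n < 2 * m then (m : ℝ)⁻¹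
  else 0

/-- `V_j^m = Σ_{i=1}^{j−1}(2/(2m+1))·δ_{2i−1} + (1/(2m+1))·δ_{2j−1}
      + Σ_{i=j}^{m}(2/(2m+1))·δ_{2i}` (as a pmf). -/
noncomputable def Vfn (j m : ℕ) : ℕ → ℝ := fun n =>
  if n = 2 * j - 1 then (2 * (m : ℝ) + 1)⁻¹
  else if Odd n ∧ n < 2 * j - 1 then 2 * (2 * (m : ℝ) + 1)⁻¹
  else if Even n ∧ 2 * j ≤ n ∧ n ≤ 2 * m then 2 * (2 * (m : ℝ) + 1)⁻¹
  else 0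

/-! Write `v = M = 2(m+1)` and `f_η(j) = M·Pr(η < j) + (M/2)·Pr(η = j) - j` for the payoff of the
pure bid `j` against `η`. Summing `f_η` over the bids `j < M` gives `M·(M/2 - E η)` plus a
nonnegative term that vanishes iff `η` lives on `{0, …, M-1}`. In an equilibrium each player's
payoff is at least this average, while the two payoffs add up to `M - E X - E Y`; so there is no
slack: both strategies live on `{0, …, M-1}` and `f_X`, `f_Y` are constant there. Since
`f_η(j+1) - f_η(j) = (M/2)(η_j + η_{j+1}) - 1`, constancy means `η_j + η_{j+1} = 2/M`, which
leaves exactly the mixtures `β·U_O^{m+1} + (1-β)·U_E^m`. Conversely, against such a mixture every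
bid below `M` earns `1 - β` and every higher bid `j` at most `M - j ≤ 0`. -/

open Finset Filter Topology

namespace Strategy

variable (η : Strategy)

lemma summable_p : Summable η.p := η.total.summable

lemma p_le_one (n : ℕ) : η.p n ≤ 1 :=
  η.total.tsum_eq ▸ η.summable_p.le_tsum n fun k _ => η.nonneg k

lemma tsum_p_mul (c : ℝ) : ∑' n, η.p n * c = c := by
  rw [tsum_mul_right, η.total.tsum_eq, one_mul]

lemma summable_mul_of_le {g : ℕ → ℝ} (h0 : ∀ n, 0 ≤ g n) (hle : ∀ n, g n ≤ n + 1) :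
    Summable fun n => η.p n * g n :=
  (η.finExp.add η.summable_p).of_nonneg_of_le (fun n => mul_nonneg (η.nonneg n) (h0 n))
    fun n => by nlinarith [η.nonneg n, hle n]

lemma hasSum_mul_sub (c : ℝ) : HasSum (fun i => η.p i * (c - i)) (c - η.exp) := by
  have hfun : (fun i : ℕ => η.p i * (c - i)) = fun i => c * η.p i - i * η.p i :=
    funext fun i => by ring
  rw [hfun]
  simpa [Strategy.exp] using (η.total.mul_left c).sub η.finExp.hasSum

def probLT (j : ℕ) : ℝ := ∑ k ∈ range j, η.p k

lemma probLT_nonneg (j : ℕ) : 0 ≤ η.probLT j := sum_nonneg fun k _ => η.nonneg k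

lemma probLT_le_one (j : ℕ) : η.probLT j ≤ 1 :=
  η.total.tsum_eq ▸ η.summable_p.sum_le_tsum _ fun k _ => η.nonneg k

lemma tendsto_probLT : Tendsto η.probLT atTop (𝓝 1) := η.total.tendsto_sum_nat

lemma sum_range_probLT_add_half (M : ℕ) :
    ∑ j ∈ range M, (η.probLT j + η.p j / 2) = ∑ i ∈ range M, η.p i * (M - 1 / 2 - i) := by
  induction M with
  | zero => simp
  | succ M ih =>
    have hshift : ∑ i ∈ range M, η.p i * ((M + 1 : ℕ) - 1 / 2 - i) =
        ∑ i ∈ range M, η.p i * (M - 1 / 2 - i) + η.probLT M := by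
      rw [probLT, ← sum_add_distrib]
      exact sum_congr rfl fun i _ => by push_cast; ring
    rw [sum_range_succ, ih, sum_range_succ _ M, hshift]
    push_cast; ring

noncomputable def overshoot (M : ℕ) : ℝ := ∑' i, η.p i * max ((i : ℝ) + 1 / 2 - M) 0

lemma summable_overshoot (M : ℕ) : Summable fun i => η.p i * max ((i : ℝ) + 1 / 2 - M) 0 :=
  η.summable_mul_of_le (fun i => le_max_right _ _) fun i =>
    max_le (by linarith [M.cast_nonneg (α := ℝ)]) (by positivity)

lemma overshoot_nonneg (M : ℕ) : 0 ≤ η.overshoot M :=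
  tsum_nonneg fun i => mul_nonneg (η.nonneg i) (le_max_right _ _)

lemma p_eq_zero_of_overshoot_eq_zero {M i : ℕ} (h : η.overshoot M = 0) (hi : M ≤ i) :
    η.p i = 0 := by
  by_contra hne
  have hpos : 0 < η.p i * max ((i : ℝ) + 1 / 2 - M) 0 := by
    have : (M : ℝ) ≤ i := by exact_mod_cast hi
    exact mul_pos ((η.nonneg i).lt_of_ne' hne) (lt_max_of_lt_left (by linarith))
  exact (η.summable_overshoot M).tsum_pos (fun i => mul_nonneg (η.nonneg i) (le_max_right _ _))
    i hpos |>.ne' h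

lemma sum_range_mul_sub_half (M : ℕ) :
    ∑ i ∈ range M, η.p i * (M - 1 / 2 - i) = M - 1 / 2 - η.exp + η.overshoot M := by
  have hsplit : ∀ i : ℕ, η.p i * max ((M : ℝ) - 1 / 2 - i) 0 =
      η.p i * (M - 1 / 2 - i) + η.p i * max ((i : ℝ) + 1 / 2 - M) 0 := fun i => by
    rw [← mul_add]; congr 1
    rcases le_total ((M : ℝ) - 1 / 2 - i) 0 with h | h
    · rw [max_eq_right h, max_eq_left (by linarith)]; ring
    · rw [max_eq_left h, max_eq_right (by linarith)]; ring
  have hmax : ∑ i ∈ range M, η.p i * (M - 1 / 2 - i) =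
      ∑' i, η.p i * max ((M : ℝ) - 1 / 2 - i) 0 := by
    rw [tsum_eq_sum (s := range M) fun i hi => by
      have : (M : ℝ) ≤ i := by exact_mod_cast not_lt.mp (mem_range.not.mp hi)
      rw [max_eq_right (by linarith), mul_zero]]
    exact sum_congr rfl fun i hi => by
      have : (i : ℝ) + 1 ≤ M := by exact_mod_cast mem_range.mp hi
      rw [max_eq_left (by linarith)]
  have hlin := η.hasSum_mul_sub (M - 1 / 2)
  rw [hmax, tsum_congr hsplit, Summable.tsum_add hlin.summable (η.summable_overshoot M),
    hlin.tsum_eq, overshoot]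

noncomputable def pure (j : ℕ) : Strategy where
  p := deltaFn j
  nonneg n := by unfold deltaFn; split <;> norm_num
  total := hasSum_ite_eq j 1
  finExp := summable_of_ne_finset_zero (s := {j}) fun n hn => by
    simp [deltaFn, Finset.mem_singleton.not.mp hn]

end Strategy

noncomputable def purePayoff (v : ℝ) (η : Strategy) (j : ℕ) : ℝ :=
  v * η.probLT j + v / 2 * η.p j - j

section PurePayoff

variable (v : ℝ) (ξ η : Strategy)

lemma purePayoff_zero : purePayoff v η 0 = v / 2 * η.p 0 := by
  simp [purePayoff, Strategy.probLT]

lemma purePayoff_succ (j : ℕ) :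
    purePayoff v η (j + 1) = purePayoff v η j + v / 2 * (η.p j + η.p (j + 1)) - 1 := by
  simp only [purePayoff, Strategy.probLT, sum_range_succ]; push_cast; ring

lemma purePayoff_le_of_p_eq_zero (hv : 0 ≤ v) {j : ℕ} (hj : η.p j = 0) :
    purePayoff v η j ≤ v - j := by
  have := mul_le_of_le_one_right hv (η.probLT_le_one j)
  simp only [purePayoff, hj, mul_zero]; linarith

lemma sum_range_natCast_mul_two (M : ℕ) : (∑ j ∈ range M, (j : ℝ)) * 2 = M * (M - 1) := by
  induction M with
  | zero => simp
  | succ M ih => rw [sum_range_succ, add_mul, ih]; push_cast; ring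

lemma sum_range_purePayoff (M : ℕ) :
    ∑ j ∈ range M, purePayoff M η j = M * (M / 2 - η.exp + η.overshoot M) := by
  calc ∑ j ∈ range M, purePayoff M η j
      = M * ∑ j ∈ range M, (η.probLT j + η.p j / 2) - ∑ j ∈ range M, (j : ℝ) := by
        rw [mul_sum, ← sum_sub_distrib]
        exact sum_congr rfl fun j _ => by unfold purePayoff; ring
    _ = _ := by
        rw [η.sum_range_probLT_add_half, η.sum_range_mul_sub_half]
        linear_combination -sum_range_natCast_mul_two M / 2

lemma mul_purePayoff_eq (j : ℕ) : ξ.p j * purePayoff v η j =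
    v * (ξ.p j * η.probLT j) + v / 2 * (ξ.p j * η.p j) - j * ξ.p j := by
  unfold purePayoff; ring

lemma summable_mul_probLT : Summable fun j => ξ.p j * η.probLT j :=
  ξ.summable_mul_of_le η.probLT_nonneg fun j => by
    linarith [η.probLT_le_one j, j.cast_nonneg (α := ℝ)]

lemma summable_mul_p : Summable fun j => ξ.p j * η.p j :=
  ξ.summable_mul_of_le η.nonneg fun j => by linarith [η.p_le_one j, j.cast_nonneg (α := ℝ)]

lemma summable_mul_purePayoff : Summable fun j => ξ.p j * purePayoff v η j := by
  simp only [mul_purePayoff_eq]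
  exact (((summable_mul_probLT ξ η).mul_left v).add
    ((summable_mul_p ξ η).mul_left _)).sub ξ.finExp

lemma payoff_eq_tsum_purePayoff : payoff v ξ η = ∑' j, ξ.p j * purePayoff v η j := by
  simp only [mul_purePayoff_eq]
  rw [Summable.tsum_sub (((summable_mul_probLT ξ η).mul_left v).add
      ((summable_mul_p ξ η).mul_left _)) ξ.finExp,
    Summable.tsum_add ((summable_mul_probLT ξ η).mul_left v) ((summable_mul_p ξ η).mul_left _),
    tsum_mul_left, tsum_mul_left]
  rfl

lemma payoff_pure (j : ℕ) : payoff v (Strategy.pure j) η = purePayoff v η j := by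
  rw [payoff_eq_tsum_purePayoff,
    tsum_eq_single j fun n hn => by simp [Strategy.pure, deltaFn, hn]]
  simp [Strategy.pure, deltaFn]

/-- Telescoping: the summand is `F_ξ(n+1) F_η(n+1) - F_ξ(n) F_η(n)` with `F = probLT`. -/
lemma hasSum_probLT_add_probLT_add_p :
    HasSum (fun n => ξ.p n * η.probLT n + η.p n * ξ.probLT n + ξ.p n * η.p n) 1 := by
  have hstep : ∀ n, ξ.p n * η.probLT n + η.p n * ξ.probLT n + ξ.p n * η.p n =
      ξ.probLT (n + 1) * η.probLT (n + 1) - ξ.probLT n * η.probLT n := fun n => by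
    simp only [Strategy.probLT, sum_range_succ]; ring
  refine (hasSum_iff_tendsto_nat_of_nonneg (fun n => by
    have := ξ.nonneg n; have := η.nonneg n
    have := ξ.probLT_nonneg n; have := η.probLT_nonneg n; positivity) 1).mpr ?_
  convert ξ.tendsto_probLT.mul η.tendsto_probLT using 2 with N
  · rw [sum_congr rfl fun n _ => hstep n]
    exact (Finset.sum_range_sub (fun n => ξ.probLT n * η.probLT n) N).trans
      (by simp [Strategy.probLT])
  · rw [mul_one]

lemma prGT_add_prGT_add_prEq : prGT ξ η + prGT η ξ + prEq ξ η = 1 := by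
  rw [← (hasSum_probLT_add_probLT_add_p ξ η).tsum_eq,
    Summable.tsum_add ((summable_mul_probLT ξ η).add (summable_mul_probLT η ξ))
      (summable_mul_p ξ η),
    Summable.tsum_add (summable_mul_probLT ξ η) (summable_mul_probLT η ξ)]
  rfl

lemma payoff_add_payoff_swap : payoff v ξ η + payoff v η ξ = v - ξ.exp - η.exp := by
  have hEq : prEq η ξ = prEq ξ η := tsum_congr fun n => mul_comm _ _
  unfold payoff
  linear_combination v * prGT_add_prGT_add_prEq ξ η + v / 2 * hEq

end PurePayoff

namespace IsNashAPA

variable {v₁ v₂ : ℝ} {X Y : Strategy}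

lemma symm (h : IsNashAPA v₁ v₂ X Y) : IsNashAPA v₂ v₁ Y X := ⟨h.2, h.1⟩

lemma purePayoff_le (h : IsNashAPA v₁ v₂ X Y) (j : ℕ) : purePayoff v₁ Y j ≤ payoff v₁ X Y :=
  payoff_pure v₁ Y j ▸ h.1 (Strategy.pure j)

/-- Each equilibrium payoff dominates the average `M/2 - E + overshoot` of the pure payoffs
below `M`, while the two payoffs add up to `M - E X - E Y`: no slack is left anywhere. -/
theorem p_eq_zero_and_purePayoff_eq {M : ℕ} (hM : 0 < M) (h : IsNashAPA M M X Y) :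
    (∀ i, M ≤ i → Y.p i = 0) ∧ ∀ j < M, purePayoff M Y j = payoff M X Y := by
  have hS : ∀ {ξ η : Strategy}, IsNashAPA M M ξ η →
      ∑ j ∈ range M, purePayoff M η j ≤ M * payoff M ξ η := fun h' => by
    simpa using sum_le_card_nsmul (range M) _ _ fun j _ => h'.purePayoff_le j
  have hMpos : (0 : ℝ) < M := by exact_mod_cast hM
  have hSY := hS h
  have hSX := hS h.symm
  rw [sum_range_purePayoff] at hSY hSX
  have hAY := le_of_mul_le_mul_left hSY hMpos
  have hAX := le_of_mul_le_mul_left hSX hMpos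
  have hsum := payoff_add_payoff_swap (M : ℝ) X Y
  have hDX := X.overshoot_nonneg M
  have hDY := Y.overshoot_nonneg M
  have hD : Y.overshoot M = 0 := by linarith
  refine ⟨fun i hi => Y.p_eq_zero_of_overshoot_eq_zero hD hi, fun j hj => ?_⟩
  have hSY' : ∑ j ∈ range M, purePayoff M Y j = ∑ j ∈ range M, payoff M X Y := by
    rw [sum_range_purePayoff, sum_const, card_range, nsmul_eq_mul]
    congr 1; linarith
  exact (sum_eq_sum_iff_of_le fun j _ => h.purePayoff_le j).mp hSY' j (mem_range.mpr hj)

end IsNashAPA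
lemma eq_of_add_succ_eq {p q : ℕ → ℝ} {K : ℕ} (h₀ : p 0 = q 0)
    (h : ∀ j, j + 1 < K → p j + p (j + 1) = q j + q (j + 1)) : ∀ j < K, p j = q j := by
  intro j hj
  induction j with
  | zero => exact h₀
  | succ j ih => linarith [h j hj, ih (by omega)]

lemma UO_add_UO_succ {N n : ℕ} (h : n + 1 < 2 * N) : UO N n + UO N (n + 1) = (N : ℝ)⁻¹ := by
  rcases Nat.even_or_odd n with hn | hn
  · simp [UO, Nat.not_odd_iff_even.mpr hn, hn.add_one, h]
  · simp [UO, hn, Nat.not_odd_iff_even.mpr hn.add_one, (by omega : n < 2 * N)]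

lemma UE_add_UE_succ {m n : ℕ} (h : n + 1 < 2 * (m + 1)) :
    UE m n + UE m (n + 1) = ((m : ℝ) + 1)⁻¹ := by
  rcases Nat.even_or_odd n with hn | hn
  · simp [UE, hn, Nat.not_even_iff_odd.mpr hn.add_one, (by omega : n ≤ 2 * m)]
  · have : n + 1 ≤ 2 * m := by obtain ⟨k, rfl⟩ := hn; omega
    simp [UE, Nat.not_even_iff_odd.mpr hn, hn.add_one, this]

noncomputable def mixOddEven (m : ℕ) (β : ℝ) (n : ℕ) : ℝ := β * UO (m + 1) n + (1 - β) * UE m n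

section MixOddEven

variable {m : ℕ} {β : ℝ}

lemma mixOddEven_zero : mixOddEven m β 0 = (1 - β) / ((m : ℝ) + 1) := by
  simp [mixOddEven, UO, UE, div_eq_mul_inv]

lemma mixOddEven_add_succ {n : ℕ} (h : n + 1 < 2 * (m + 1)) :
    mixOddEven m β n + mixOddEven m β (n + 1) = ((m : ℝ) + 1)⁻¹ := by
  have hO := UO_add_UO_succ h
  have hE := UE_add_UE_succ h
  push_cast at hO
  unfold mixOddEven
  linear_combination β * hO + (1 - β) * hE

lemma mixOddEven_eq_zero {n : ℕ} (h : 2 * (m + 1) ≤ n) : mixOddEven m β n = 0 := by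
  have hO : ¬ n < 2 * (m + 1) := by omega
  have hE : ¬ n ≤ 2 * m := by omega
  simp [mixOddEven, UO, UE, hO, hE]

end MixOddEven

section Equilibrium

variable {m : ℕ} {β : ℝ} {Y : Strategy}

lemma purePayoff_eq_of_eq_mixOddEven (hY : ∀ n, Y.p n = mixOddEven m β n) {j : ℕ}
    (hj : j < 2 * (m + 1)) : purePayoff (2 * ((m : ℝ) + 1)) Y j = 1 - β := by
  have hm : (m : ℝ) + 1 ≠ 0 := by positivity
  induction j with
  | zero => rw [purePayoff_zero, hY, mixOddEven_zero]; field_simp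
  | succ j ih =>
    rw [purePayoff_succ, ih (by omega), hY, hY, mixOddEven_add_succ hj]
    field_simp; ring

lemma purePayoff_le_of_eq_mixOddEven (hβ : β ≤ 1) (hY : ∀ n, Y.p n = mixOddEven m β n)
    (j : ℕ) : purePayoff (2 * ((m : ℝ) + 1)) Y j ≤ 1 - β := by
  rcases lt_or_ge j (2 * (m + 1)) with hj | hj
  · exact (purePayoff_eq_of_eq_mixOddEven hY hj).le
  · have hj' : 2 * ((m : ℝ) + 1) ≤ j := by exact_mod_cast hj
    have := purePayoff_le_of_p_eq_zero (2 * ((m : ℝ) + 1)) Y (by positivity)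
      ((hY j).trans (mixOddEven_eq_zero hj))
    linarith

lemma payoff_le_of_eq_mixOddEven (hβ : β ≤ 1) (hY : ∀ n, Y.p n = mixOddEven m β n)
    (ξ : Strategy) : payoff (2 * ((m : ℝ) + 1)) ξ Y ≤ 1 - β :=
  calc payoff (2 * ((m : ℝ) + 1)) ξ Y ≤ ∑' j, ξ.p j * (1 - β) := by
        rw [payoff_eq_tsum_purePayoff]
        exact Summable.tsum_le_tsum
          (fun j => mul_le_mul_of_nonneg_left (purePayoff_le_of_eq_mixOddEven hβ hY j) (ξ.nonneg j))
          (summable_mul_purePayoff _ ξ Y) (ξ.summable_p.mul_right _)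
    _ = 1 - β := ξ.tsum_p_mul _

lemma payoff_eq_of_eq_mixOddEven (hY : ∀ n, Y.p n = mixOddEven m β n) (ξ : Strategy)
    (hξ : ∀ n, 2 * (m + 1) ≤ n → ξ.p n = 0) : payoff (2 * ((m : ℝ) + 1)) ξ Y = 1 - β := by
  rw [payoff_eq_tsum_purePayoff, ← ξ.tsum_p_mul (1 - β)]
  refine tsum_congr fun j => ?_
  rcases lt_or_ge j (2 * (m + 1)) with hj | hj
  · rw [purePayoff_eq_of_eq_mixOddEven hY hj]
  · rw [hξ j hj, zero_mul, zero_mul]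

lemma exists_eq_mixOddEven_of_isNashAPA {X : Strategy}
    (h : IsNashAPA (2 * ((m : ℝ) + 1)) (2 * ((m : ℝ) + 1)) X Y) :
    ∃ β, 0 ≤ β ∧ β ≤ 1 ∧ ∀ n, Y.p n = mixOddEven m β n := by
  have hM : (2 * ((m : ℝ) + 1)) = ((2 * (m + 1) : ℕ) : ℝ) := by push_cast; ring
  rw [hM] at h
  obtain ⟨hzero, hconst⟩ := h.p_eq_zero_and_purePayoff_eq (by omega)
  rw [← hM] at hconst
  have hm : (0 : ℝ) < m + 1 := by positivity
  have hpair : ∀ j, j + 1 < 2 * (m + 1) → Y.p j + Y.p (j + 1) = ((m : ℝ) + 1)⁻¹ := by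
    intro j hj
    have := purePayoff_succ (2 * ((m : ℝ) + 1)) Y j
    rw [hconst j (by omega), hconst (j + 1) hj] at this
    field_simp
    linarith
  have h01 := hpair 0 (by omega)
  refine ⟨1 - (m + 1) * Y.p 0, ?_, by nlinarith [Y.nonneg 0], fun n => ?_⟩
  · have := Y.nonneg 1
    field_simp at h01
    nlinarith
  rcases lt_or_ge n (2 * (m + 1)) with hn | hn
  · refine eq_of_add_succ_eq ?_ (fun j hj => (hpair j hj).trans (mixOddEven_add_succ hj).symm) n hn
    rw [mixOddEven_zero]
    field_simp
    ring
  · rw [hzero n hn, mixOddEven_eq_zero hn]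

end Equilibrium

theorem allpay_equilibria_equal_even_general (v1 v2 : ℝ) (hv : v1 = v2)
    (m : ℕ) (hm : v2 = 2 * ((m : ℝ) + 1)) (X Y : Strategy) :
    IsNashAPA v1 v2 X Y ↔
      ∃ α β : ℝ, 0 ≤ α ∧ α ≤ 1 ∧ 0 ≤ β ∧ β ≤ 1 ∧
        (∀ n, X.p n = α * UO (m + 1) n + (1 - α) * UE m n) ∧
        (∀ n, Y.p n = β * UO (m + 1) n + (1 - β) * UE m n) ∧
        payoff v1 X Y = 1 - β ∧ payoff v2 Y X = 1 - α := by
  subst hv hm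
  constructor
  · intro h
    obtain ⟨α, hα₀, hα₁, hX⟩ := exists_eq_mixOddEven_of_isNashAPA h.symm
    obtain ⟨β, hβ₀, hβ₁, hY⟩ := exists_eq_mixOddEven_of_isNashAPA h
    exact ⟨α, β, hα₀, hα₁, hβ₀, hβ₁, hX, hY,
      payoff_eq_of_eq_mixOddEven hY X fun n hn => (hX n).trans (mixOddEven_eq_zero hn),
      payoff_eq_of_eq_mixOddEven hX Y fun n hn => (hY n).trans (mixOddEven_eq_zero hn)⟩
  · rintro ⟨α, β, -, hα₁, -, hβ₁, hX, hY, hXY, hYX⟩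
    exact ⟨fun X' => hXY ▸ payoff_le_of_eq_mixOddEven hβ₁ hY X',
      fun Y' => hYX ▸ payoff_le_of_eq_mixOddEven hα₁ hX Y'⟩

/-- characterization of equilibria when `v1 = v2 > 0` and
`v2/2` is a positive integer (so `v2 = 2(m+1)` with `m = v2/2 − 1`). -/
theorem allpay_equilibria_equal_even (v1 v2 : ℝ) (hv2 : 0 < v2) (hv : v1 = v2)
    (m : ℕ) (hm : v2 = 2 * ((m : ℝ) + 1)) (X Y : Strategy) :
    IsNashAPA v1 v2 X Y ↔
      ∃ α β : ℝ, 0 ≤ α ∧ α ≤ 1 ∧ 0 ≤ β ∧ β ≤ 1 ∧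
        (∀ n, X.p n = α * UO (m + 1) n + (1 - α) * UE m n) ∧
        (∀ n, Y.p n = β * UO (m + 1) n + (1 - β) * UE m n) ∧
        payoff v1 X Y = 1 - β ∧ payoff v2 Y X = 1 - α :=
  allpay_equilibria_equal_even_general v1 v2 hv m hm X Y
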